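/- Let P be a partial order, f an order automorphism of P, and x, y ∈ P. The following are equivalent: (i) x' < y' for all x' ∼_f x and all y' ∼_f y; (ii) f^n(x) < y for every n : ℤ; (iii) x < f^n(y) for every n : ℤ; (iv) x ≤ f^i(y) for every i : ℤ, and x ≠ y. -/

import Mathlib

variable {P : Type*} [PartialOrder P]

/-- `x ∼_f y` iff there are `i j : ℤ` with `f^i x ≤ y ≤ f^j x`. -/
def orbRel (f : P ≃o P) (x y : P) : Prop :=
  ∃ i j : ℤ, (f ^ i) x ≤ y ∧ y ≤ (f ^ j) x

/-!
Everything reduces to the fact that each `f ^ n` is an order automorphism with inverse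
`f ^ (-n)`, so inequalities can be moved along the orbit of `f`. The only non-formal step is
`(iv) → (iii)`: if `x = f^n y` while `x ≤ f^i y` for all `i`, then `x ≤ f^k x` for all `k`,
which forces `x` to be a fixed point of every `f^k`, hence `y = f^(-n) x = x`.
-/

namespace OrderIso

section LE

variable {α : Type*} [LE α] (f : α ≃o α)

theorem zpow_apply_zpow_apply (m n : ℤ) (a : α) : (f ^ m) ((f ^ n) a) = (f ^ (m + n)) a := by
  rw [zpow_add, RelIso.mul_apply]

theorem zpow_neg_apply_zpow_apply (n : ℤ) (a : α) : (f ^ (-n)) ((f ^ n) a) = a := by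
  rw [zpow_apply_zpow_apply, neg_add_cancel, zpow_zero, RelIso.one_apply]

theorem le_zpow_neg_apply_iff (n : ℤ) {a b : α} : a ≤ (f ^ (-n)) b ↔ (f ^ n) a ≤ b := by
  rw [zpow_neg]
  exact (f ^ n).le_symm_apply

theorem zpow_neg_apply_le_iff (n : ℤ) {a b : α} : (f ^ (-n)) a ≤ b ↔ a ≤ (f ^ n) b := by
  rw [zpow_neg]
  exact (f ^ n).symm_apply_le

end LE

theorem zpow_apply_lt_iff_lt_zpow_neg_apply {α : Type*} [Preorder α] (f : α ≃o α) (n : ℤ)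
    {a b : α} : (f ^ n) a < b ↔ a < (f ^ (-n)) b := by
  rw [zpow_neg]
  exact (f ^ n).lt_symm_apply.symm

theorem zpow_apply_eq_self_of_forall_le {α : Type*} [PartialOrder α] (f : α ≃o α) {a : α}
    (h : ∀ k : ℤ, a ≤ (f ^ k) a) (n : ℤ) : (f ^ n) a = a :=
  le_antisymm ((f.le_zpow_neg_apply_iff n).mp (h (-n))) (h n)

end OrderIso

open OrderIso

section

variable {f : P ≃o P}

theorem orbRel_refl (x : P) : orbRel f x x :=
  ⟨0, 0, le_rfl, le_rfl⟩

theorem orbRel_zpow_apply (n : ℤ) (x : P) : orbRel f ((f ^ n) x) x :=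
  ⟨-n, -n, (zpow_neg_apply_zpow_apply f n x).le, (zpow_neg_apply_zpow_apply f n x).ge⟩

theorem orbRel.exists_le_zpow_apply {x' x : P} (h : orbRel f x' x) : ∃ k : ℤ, x' ≤ (f ^ k) x :=
  let ⟨i, _, hi, _⟩ := h
  ⟨-i, (f.le_zpow_neg_apply_iff i).mpr hi⟩

theorem orbRel.exists_zpow_apply_le {y' y : P} (h : orbRel f y' y) : ∃ k : ℤ, (f ^ k) y ≤ y' :=
  let ⟨_, j, _, hj⟩ := h
  ⟨-j, (f.zpow_neg_apply_le_iff j).mpr hj⟩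

end

section

variable (f : P ≃o P) (x y : P)

theorem forall_orbRel_lt_iff :
    (∀ x' y' : P, orbRel f x' x → orbRel f y' y → x' < y') ↔ ∀ n : ℤ, (f ^ n) x < y := by
  refine ⟨fun h n => h _ _ (orbRel_zpow_apply n x) (orbRel_refl y), fun h x' y' hx hy => ?_⟩
  obtain ⟨k, hk⟩ := hx.exists_le_zpow_apply
  obtain ⟨l, hl⟩ := hy.exists_zpow_apply_le
  have hkl : (f ^ k) x < (f ^ l) y := by
    simpa only [zpow_apply_zpow_apply, add_sub_cancel] using (f ^ l).strictMono (h (k - l))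
  exact hk.trans_lt (hkl.trans_le hl)

theorem forall_zpow_apply_lt_iff_forall_lt_zpow_apply :
    (∀ n : ℤ, (f ^ n) x < y) ↔ ∀ n : ℤ, x < (f ^ n) y := by
  simp only [zpow_apply_lt_iff_lt_zpow_neg_apply]
  exact (neg_surjective.forall (p := fun n : ℤ => x < (f ^ n) y)).symm

theorem forall_lt_zpow_apply_iff :
    (∀ n : ℤ, x < (f ^ n) y) ↔ (∀ i : ℤ, x ≤ (f ^ i) y) ∧ x ≠ y := by
  refine ⟨fun h => ⟨fun i => (h i).le, by simpa using (h 0).ne⟩, fun ⟨hle, hne⟩ n => ?_⟩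
  refine (hle n).lt_of_ne fun hx => hne ?_
  have hfix : ∀ k : ℤ, x ≤ (f ^ k) x := fun k =>
    (hle (k + n)).trans_eq (by rw [hx, zpow_apply_zpow_apply])
  calc x = (f ^ (-n)) x := (f.zpow_apply_eq_self_of_forall_le hfix (-n)).symm
    _ = y := by rw [hx, zpow_neg_apply_zpow_apply]

end

/-- Characterizations of the strong order on orbitals. The following are equivalent:
(i) `x' < y'` for all `x' ∼_f x` and `y' ∼_f y`; (ii) `f^n x < y` for all `n : ℤ`;
(iii) `x < f^n y` for all `n : ℤ`; (iv) `x ≤ f^i y` for all `i : ℤ`, and `x ≠ y`. -/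
theorem strong_order_iff (f : P ≃o P) (x y : P) :
    ((∀ x' y' : P, orbRel f x' x → orbRel f y' y → x' < y') ↔
      (∀ n : ℤ, (f ^ n) x < y)) ∧
    ((∀ x' y' : P, orbRel f x' x → orbRel f y' y → x' < y') ↔
      (∀ n : ℤ, x < (f ^ n) y)) ∧
    ((∀ x' y' : P, orbRel f x' x → orbRel f y' y → x' < y') ↔
      ((∀ i : ℤ, x ≤ (f ^ i) y) ∧ x ≠ y)) := by
  have h₁ := forall_orbRel_lt_iff f x y
  have h₂ := forall_zpow_apply_lt_iff_forall_lt_zpow_apply f x y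
  have h₃ := forall_lt_zpow_apply_iff f x y
  exact ⟨h₁, h₁.trans h₂, h₁.trans (h₂.trans h₃)⟩
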